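/- arXiv:1003.3297 — 6 statements merged into one kernel-verified Lean document; each statement's English description precedes it below -/
import Mathlib

section
/- For any positive integers w1, w2 and any q in a commutative ring R, Σ_{k=0}^n C(n,k) · S_{k,q^{w1}}(w2 − 1) · S_{n−k,q}(w1 − 1) · w1^k = Σ_{k=0}^n C(n,k) · S_{k,q^{w2}}(w1 − 1) · S_{n−k,q}(w2 − 1) · w2^k. -/
open Finset

/-- The q-analogue of power sums: `S_{k,q}(m) = Σ_{i=0}^m i^k q^i` (with `0^0 = 1`). -/
def qS {R : Type*} [CommRing R] (q : R) (k m : ℕ) : R :=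
  ∑ i ∈ Finset.range (m + 1), (i : R) ^ k * q ^ i

/-- q-Bernoulli numbers `b_n(q, L)`: `(q-1) b_0 = L` and for `n ≥ 1`,
`(q-1) b_n = [n = 1] - q Σ_{k<n} C(n,k) b_k`. -/
noncomputable def qb {R : Type*} [CommRing R] (q L : R) : ℕ → R
  | 0 => Ring.inverse (q - 1) * L
  | n + 1 =>
      Ring.inverse (q - 1) *
        ((if n + 1 = 1 then (1 : R) else 0) -
          q * ∑ k ∈ (Finset.range (n + 1)).attach,
              ((n + 1).choose k.1 : R) * qb q L k.1)
  termination_by n => n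
  decreasing_by exact Finset.mem_range.mp k.2

/-- q-Bernoulli polynomials `B_{n,q}(x) = Σ_{k=0}^n C(n,k) b_k(q,L) x^{n-k}`. -/
noncomputable def qB {R : Type*} [CommRing R] (q L : R) (n : ℕ) (x : R) : R :=
  ∑ k ∈ Finset.range (n + 1), (n.choose k : R) * qb q L k * x ^ (n - k)


lemma qS_key {R : Type*} [CommRing R] (q : R) (a b n : ℕ) (ha : 0 < a) (hb : 0 < b) :
    ∑ k ∈ Finset.range (n + 1), (n.choose k : R) * qS (q ^ a) k (b - 1) *
        qS q (n - k) (a - 1) * (a : R) ^ k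
      = ∑ m ∈ Finset.range (a * b), (m : R) ^ n * q ^ m := by
  have h1 : b - 1 + 1 = b := Nat.succ_pred_eq_of_pos hb
  have h2 : a - 1 + 1 = a := Nat.succ_pred_eq_of_pos ha
  simp only [qS, h1, h2]
  have step1 : ∀ k ∈ Finset.range (n+1),
      (n.choose k : R) * (∑ i ∈ Finset.range b, (i:R)^k * (q^a)^i) *
        (∑ j ∈ Finset.range a, (j:R)^(n-k) * q^j) * (a:R)^k
      = ∑ i ∈ Finset.range b, ∑ j ∈ Finset.range a,
          ((a*i:ℕ):R)^k * ((j:R))^(n-k) * (n.choose k : R) * q^(a*i+j) := by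
    intro k _
    simp only [Finset.mul_sum, Finset.sum_mul]
    rw [Finset.sum_comm]
    refine Finset.sum_congr rfl fun i _ => Finset.sum_congr rfl fun j _ => ?_
    push_cast
    rw [mul_pow, pow_add, ← pow_mul]
    ring
  rw [Finset.sum_congr rfl step1]
  have swap : (∑ k ∈ Finset.range (n+1), ∑ i ∈ Finset.range b, ∑ j ∈ Finset.range a,
        ((a*i:ℕ):R)^k * ((j:R))^(n-k) * (n.choose k : R) * q^(a*i+j))
      = ∑ i ∈ Finset.range b, ∑ j ∈ Finset.range a, ∑ k ∈ Finset.range (n+1),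
        ((a*i:ℕ):R)^k * ((j:R))^(n-k) * (n.choose k : R) * q^(a*i+j) := by
    rw [Finset.sum_comm]
    exact Finset.sum_congr rfl fun i _ => Finset.sum_comm
  rw [swap]
  have step2 : ∀ i ∈ Finset.range b,
      ∑ j ∈ Finset.range a, ∑ k ∈ Finset.range (n+1),
        ((a*i:ℕ):R)^k * ((j:R))^(n-k) * (n.choose k : R) * q^(a*i+j)
      = ∑ j ∈ Finset.range a, ((a*i+j:ℕ):R)^n * q^(a*i+j) := by
    intro i _
    refine Finset.sum_congr rfl fun j _ => ?_
    rw [← Finset.sum_mul]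
    congr 1
    push_cast
    rw [add_pow]
  rw [Finset.sum_congr rfl step2, ← Finset.sum_product']
  refine Finset.sum_nbij' (fun p => a * p.1 + p.2) (fun m => (m / a, m % a)) ?_ ?_ ?_ ?_ ?_
  · rintro ⟨i, j⟩ hp
    simp only [Finset.mem_product, Finset.mem_range] at hp
    refine Finset.mem_range.mpr ?_
    calc a * i + j < a * i + a := by omega
      _ = a * (i + 1) := by ring
      _ ≤ a * b := Nat.mul_le_mul_left a hp.1
  · intro m hm
    simp only [Finset.mem_range] at hm
    simp only [Finset.mem_product, Finset.mem_range]
    constructor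
    · exact Nat.div_lt_of_lt_mul hm
    · exact Nat.mod_lt _ ha
  · rintro ⟨i, j⟩ hp
    simp only [Finset.mem_product, Finset.mem_range] at hp
    simp [Nat.mul_add_div ha, Nat.mul_add_mod, Nat.div_eq_of_lt hp.2, Nat.mod_eq_of_lt hp.2]
  · intro m _
    exact Nat.div_add_mod m a
  · rintro ⟨i, j⟩ _
    rfl

theorem symm_two_powersum {R : Type*} [CommRing R] (q : R) (w1 w2 : ℕ)
    (hw1 : 0 < w1) (hw2 : 0 < w2) (n : ℕ) :
    ∑ k ∈ Finset.range (n + 1), (n.choose k : R) * qS (q ^ w1) k (w2 - 1) *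
        qS q (n - k) (w1 - 1) * (w1 : R) ^ k
      = ∑ k ∈ Finset.range (n + 1), (n.choose k : R) * qS (q ^ w2) k (w1 - 1) *
          qS q (n - k) (w2 - 1) * (w2 : R) ^ k := by
  rw [qS_key q w1 w2 n hw1 hw2, qS_key q w2 w1 n hw2 hw1, Nat.mul_comm]
end

section
/- For any positive integers w1, w2, w3 and q in a commutative ring R, the sum Σ_{k+l+m=n} (n choose k,l,m) · S_{k,q^{w3}}(w1 − 1) · S_{l,q^{w1}}(w2 − 1) · S_{m,q^{w2}}(w3 − 1) · w3^k · w1^l · w2^m equals the same expression with w2 and w3 interchanged, i.e. Σ_{k+l+m=n} (n choose k,l,m) · S_{k,q^{w2}}(w1 − 1) · S_{l,q^{w1}}(w3 − 1) · S_{m,q^{w3}}(w2 − 1) · w2^k · w1^l · w3^m. -/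
open Finset

namespace SymmThreeAux

open Polynomial

/-- The box `[0,a) × [0,b) × [0,c)`. -/
def cbox (a b c : ℕ) : Finset (ℕ × ℕ × ℕ) := (range a) ×ˢ (range b) ×ˢ (range c)

/-- The linear form `c i + a j + b t`. -/
def clin (a b c : ℕ) (x : ℕ × ℕ × ℕ) : ℕ := c * x.1 + a * x.2.1 + b * x.2.2

lemma cbox_expand {M : Type*} [AddCommMonoid M] (a b c : ℕ) (f : ℕ → ℕ → ℕ → M) :
    ∑ x ∈ cbox a b c, f x.1 x.2.1 x.2.2
      = ∑ i ∈ range a, ∑ j ∈ range b, ∑ t ∈ range c, f i j t := by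
  simp only [cbox, Finset.sum_product]

lemma sum_rev {M : Type*} [AddCommMonoid M] (sa sb sc : Finset ℕ) (f : ℕ → ℕ → ℕ → M) :
    ∑ i ∈ sa, ∑ j ∈ sb, ∑ t ∈ sc, f i j t = ∑ t ∈ sc, ∑ j ∈ sb, ∑ i ∈ sa, f i j t :=
  calc ∑ i ∈ sa, ∑ j ∈ sb, ∑ t ∈ sc, f i j t
      = ∑ j ∈ sb, ∑ i ∈ sa, ∑ t ∈ sc, f i j t := Finset.sum_comm
    _ = ∑ j ∈ sb, ∑ t ∈ sc, ∑ i ∈ sa, f i j t :=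
        Finset.sum_congr rfl fun _ _ => Finset.sum_comm
    _ = ∑ t ∈ sc, ∑ j ∈ sb, ∑ i ∈ sa, f i j t := Finset.sum_comm

lemma geom_aux (u v : ℕ) :
    (∑ i ∈ range u, (X:ℤ[X])^(v*i)) * ((X:ℤ[X])^v - 1) = X^(v*u) - 1 := by
  simpa [pow_mul] using geom_sum_mul ((X:ℤ[X])^v) u

lemma prod_expand (a b c : ℕ) :
    ∑ x ∈ cbox a b c, (X:ℤ[X]) ^ (clin a b c x)
      = (∑ i ∈ range a, (X:ℤ[X])^(c*i)) * (∑ j ∈ range b, (X:ℤ[X])^(a*j)) *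
        (∑ t ∈ range c, (X:ℤ[X])^(b*t)) := by
  simp only [clin]
  rw [cbox_expand a b c (fun i j t => (X:ℤ[X]) ^ (c*i+a*j+b*t))]
  simp only [pow_add, Finset.sum_mul, Finset.mul_sum]
  exact sum_rev _ _ _ _

lemma poly_key (a b c : ℕ) (ha : 0 < a) (hb : 0 < b) (hc : 0 < c) :
    ∑ x ∈ cbox a b c, (X:ℤ[X]) ^ (clin a b c x)
      = ∑ x ∈ cbox a c b, (X:ℤ[X]) ^ (clin a c b x) := by
  rw [prod_expand, prod_expand]
  have hne : ∀ m : ℕ, 0 < m → ((X:ℤ[X])^m - 1) ≠ 0 := fun m hm => by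
    simpa using X_pow_sub_C_ne_zero hm (1:ℤ)
  apply mul_right_cancel₀ (b := ((X:ℤ[X])^a - 1) * ((X:ℤ[X])^b - 1) * ((X:ℤ[X])^c - 1))
    (mul_ne_zero (mul_ne_zero (hne a ha) (hne b hb)) (hne c hc))
  calc (∑ i ∈ range a, (X:ℤ[X])^(c*i)) * (∑ j ∈ range b, (X:ℤ[X])^(a*j)) *
        (∑ t ∈ range c, (X:ℤ[X])^(b*t)) * (((X:ℤ[X])^a - 1) * ((X:ℤ[X])^b - 1) * ((X:ℤ[X])^c - 1))
      = ((∑ i ∈ range a, (X:ℤ[X])^(c*i)) * ((X:ℤ[X])^c - 1)) *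
        ((∑ j ∈ range b, (X:ℤ[X])^(a*j)) * ((X:ℤ[X])^a - 1)) *
        ((∑ t ∈ range c, (X:ℤ[X])^(b*t)) * ((X:ℤ[X])^b - 1)) := by ring
    _ = ((X:ℤ[X])^(c*a) - 1) * ((X:ℤ[X])^(a*b) - 1) * ((X:ℤ[X])^(b*c) - 1) := by
        rw [geom_aux, geom_aux, geom_aux]
    _ = ((∑ i ∈ range a, (X:ℤ[X])^(b*i)) * ((X:ℤ[X])^b - 1)) *
        ((∑ j ∈ range c, (X:ℤ[X])^(a*j)) * ((X:ℤ[X])^a - 1)) *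
        ((∑ t ∈ range b, (X:ℤ[X])^(c*t)) * ((X:ℤ[X])^c - 1)) := by
        rw [geom_aux, geom_aux, geom_aux, mul_comm b a, mul_comm a c, mul_comm c b]
        ring
    _ = _ := by ring

lemma multiset_key (a b c : ℕ) (ha : 0 < a) (hb : 0 < b) (hc : 0 < c) :
    (cbox a b c).val.map (clin a b c) = (cbox a c b).val.map (clin a c b) := by
  ext m
  rw [Multiset.count_map, Multiset.count_map]
  have h := congrArg (fun p => Polynomial.coeff p m) (poly_key a b c ha hb hc)
  simp only [finset_sum_coeff, coeff_X_pow] at h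
  rw [Finset.sum_boole, Finset.sum_boole] at h
  have h' : #(Finset.filter (fun x => m = clin a b c x) (cbox a b c))
      = #(Finset.filter (fun x => m = clin a c b x) (cbox a c b)) := by exact_mod_cast h
  simpa [Finset.card, Finset.filter_val] using h'

lemma sum_key {R : Type*} [CommRing R] (F : ℕ → R) (a b c : ℕ)
    (ha : 0 < a) (hb : 0 < b) (hc : 0 < c) :
    ∑ x ∈ cbox a b c, F (clin a b c x) = ∑ x ∈ cbox a c b, F (clin a c b x) := by
  rw [Finset.sum_eq_multiset_sum, Finset.sum_eq_multiset_sum,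
    show (fun x => F (clin a b c x)) = F ∘ (clin a b c) from rfl,
    show (fun x => F (clin a c b x)) = F ∘ (clin a c b) from rfl,
    ← Multiset.map_map, ← Multiset.map_map, multiset_key a b c ha hb hc]

lemma trinom {R : Type*} [CommRing R] (x y z : R) (n : ℕ) :
    (x + y + z)^n = ∑ k ∈ range (n+1), ∑ l ∈ range (n-k+1),
      ((n.choose k : R) * ((n-k).choose l : R)) * (x^k * y^l * z^(n-k-l)) := by
  rw [add_assoc, add_pow]
  refine Finset.sum_congr rfl fun k hk => ?_
  rw [add_pow, Finset.mul_sum, Finset.sum_mul]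
  exact Finset.sum_congr rfl fun l hl => by ring

lemma interchange {M : Type*} [AddCommMonoid M] (n : ℕ) (sa sb sc : Finset ℕ)
    (F : ℕ → ℕ → ℕ → ℕ → ℕ → M) :
    ∑ k ∈ range (n+1), ∑ l ∈ range (n-k+1), ∑ i ∈ sa, ∑ j ∈ sb, ∑ t ∈ sc, F k l i j t
      = ∑ i ∈ sa, ∑ j ∈ sb, ∑ t ∈ sc, ∑ k ∈ range (n+1), ∑ l ∈ range (n-k+1), F k l i j t := by
  rw [Finset.sum_sigma']
  rw [Finset.sum_comm]
  refine Finset.sum_congr rfl fun i _ => ?_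
  rw [Finset.sum_comm]
  refine Finset.sum_congr rfl fun j _ => ?_
  rw [Finset.sum_comm]
  exact Finset.sum_congr rfl fun t _ => (Finset.sum_sigma _ _ _)

lemma side_expand {R : Type*} [CommRing R] (q : R) (n a b c : ℕ)
    (ha : 0 < a) (hb : 0 < b) (hc : 0 < c) :
    ∑ k ∈ Finset.range (n + 1), ∑ l ∈ Finset.range (n - k + 1),
        ((n.choose k : R) * ((n - k).choose l : R)) *
          qS (q ^ c) k (a - 1) * qS (q ^ a) l (b - 1) * qS (q ^ b) (n - k - l) (c - 1) *
          (c : R) ^ k * (a : R) ^ l * (b : R) ^ (n - k - l)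
      = ∑ x ∈ cbox a b c, ((clin a b c x : ℕ) : R) ^ n * q ^ (clin a b c x) := by
  simp only [clin]
  rw [cbox_expand a b c (fun i j t => (((c*i+a*j+b*t : ℕ)):R)^n * q^(c*i+a*j+b*t))]
  have hR : ∀ i j t : ℕ, (((c*i+a*j+b*t : ℕ)):R)^n * q^(c*i+a*j+b*t)
      = ∑ k ∈ range (n+1), ∑ l ∈ range (n-k+1),
          ((n.choose k : R) * ((n-k).choose l : R)) *
            ((i:R)^k * (q^c)^i * ((j:R)^l * (q^a)^j) * ((t:R)^(n-k-l) * (q^b)^t) *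
             (c:R)^k * (a:R)^l * (b:R)^(n-k-l)) := by
    intro i j t
    have hcast : (((c*i+a*j+b*t : ℕ)):R) = (c:R)*(i:R) + (a:R)*(j:R) + (b:R)*(t:R) := by
      push_cast; ring
    rw [hcast, trinom, Finset.sum_mul]
    refine Finset.sum_congr rfl fun k _ => ?_
    rw [Finset.sum_mul]
    refine Finset.sum_congr rfl fun l _ => ?_
    rw [pow_add, pow_add, pow_mul, pow_mul, pow_mul]
    ring
  simp only [hR]
  rw [← interchange n (range a) (range b) (range c)]
  refine Finset.sum_congr rfl fun k _ => Finset.sum_congr rfl fun l _ => ?_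
  simp only [qS, Nat.sub_add_cancel ha, Nat.sub_add_cancel hb, Nat.sub_add_cancel hc]
  rw [show ((n.choose k : R) * ((n - k).choose l : R)) *
        (∑ i ∈ range a, (i:R)^k * (q^c)^i) * (∑ j ∈ range b, (j:R)^l * (q^a)^j) *
        (∑ t ∈ range c, (t:R)^(n-k-l) * (q^b)^t) * (c : R) ^ k * (a : R) ^ l * (b : R) ^ (n - k - l)
      = (((n.choose k : R) * ((n - k).choose l : R)) * (c : R) ^ k * (a : R) ^ l *
          (b : R) ^ (n - k - l)) *
        ((∑ i ∈ range a, (i:R)^k * (q^c)^i) * ((∑ j ∈ range b, (j:R)^l * (q^a)^j) *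
         (∑ t ∈ range c, (t:R)^(n-k-l) * (q^b)^t))) from by ring]
  simp only [Finset.mul_sum, Finset.sum_mul]
  rw [sum_rev]
  exact Finset.sum_congr rfl fun i _ => Finset.sum_congr rfl fun j _ =>
    Finset.sum_congr rfl fun t _ => by ring

end SymmThreeAux

theorem symm_three_powersum {R : Type*} [CommRing R] (q : R) (w1 w2 w3 : ℕ)
    (hw1 : 0 < w1) (hw2 : 0 < w2) (hw3 : 0 < w3) (n : ℕ) :
    ∑ k ∈ Finset.range (n + 1), ∑ l ∈ Finset.range (n - k + 1),
        ((n.choose k : R) * ((n - k).choose l : R)) *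
          qS (q ^ w3) k (w1 - 1) * qS (q ^ w1) l (w2 - 1) * qS (q ^ w2) (n - k - l) (w3 - 1) *
          (w3 : R) ^ k * (w1 : R) ^ l * (w2 : R) ^ (n - k - l)
      = ∑ k ∈ Finset.range (n + 1), ∑ l ∈ Finset.range (n - k + 1),
          ((n.choose k : R) * ((n - k).choose l : R)) *
            qS (q ^ w2) k (w1 - 1) * qS (q ^ w1) l (w3 - 1) * qS (q ^ w3) (n - k - l) (w2 - 1) *
            (w2 : R) ^ k * (w1 : R) ^ l * (w3 : R) ^ (n - k - l) := by
  rw [SymmThreeAux.side_expand q n w1 w2 w3 hw1 hw2 hw3,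
    SymmThreeAux.side_expand q n w1 w3 w2 hw1 hw3 hw2]
  exact SymmThreeAux.sum_key (fun m => ((m : ℕ) : R) ^ n * q ^ m) w1 w2 w3 hw1 hw2 hw3
end

section
/- For any positive integer w, any x ∈ R, and any n ≥ 0: w · B_{n,q}(w·x) = Σ_{k=0}^n C(n,k) · B_{k,q^w}(x) · S_{n−k,q}(w − 1) · w^k. -/
/-!
Write `F_{q,L}(t) = Σ bₙ tⁿ/n!`; the recursion for the `bₙ` says `(q eᵗ - 1) F_{q,L}(t) = L + t`.
Substituting `t ↦ wt` in the same identity for `(q^w, wL)` gives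
`(q^w e^{wt} - 1) F_{q^w,wL}(wt) = w (L + t)`, and `q^w e^{wt} - 1 = (q eᵗ - 1) Σ_{i<w} qⁱ e^{it}`,
where the geometric sum is the exponential generating function of `m ↦ S_{m,q}(w - 1)`.
Cancelling the unit `q eᵗ - 1` yields `w F_{q,L}(t) = F_{q^w,wL}(wt) Σ_{i<w} qⁱ e^{it}`;
multiplying by `e^{wxt}` and comparing coefficients of `tⁿ/n!` gives the formula.
-/

open Finset

open scoped Nat

namespace PowerSeries

theorem rescale_C {R : Type*} [CommSemiring R] (a r : R) : rescale a (C r) = C r := by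
  ext n
  rcases n with _ | n <;> simp [coeff_rescale, coeff_C]

variable {R : Type*} [CommRing R] [Algebra ℚ R]

noncomputable def egf : (ℕ → R) →ₗ[R] R⟦X⟧ where
  toFun a := mk fun n => (n ! : ℚ)⁻¹ • a n
  map_add' a b := by ext; simp [smul_add]
  map_smul' c a := by ext; simp

theorem coeff_egf (a : ℕ → R) (n : ℕ) : coeff n (egf a) = (n ! : ℚ)⁻¹ • a n := by
  simp [egf]

theorem egf_injective : Function.Injective (egf : (ℕ → R) → R⟦X⟧) := by
  intro a b h
  funext n
  have hn := congrArg (coeff n) h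
  rw [coeff_egf, coeff_egf] at hn
  exact smul_right_injective R (inv_ne_zero (by positivity : (n ! : ℚ) ≠ 0)) hn

theorem C_mul_egf (r : R) (a : ℕ → R) : C r * egf a = egf (fun n => r * a n) := by
  rw [← smul_eq_C_mul, ← map_smul]
  rfl

theorem rescale_egf (c : R) (a : ℕ → R) : rescale c (egf a) = egf (fun n => c ^ n * a n) := by
  ext n
  simp [coeff_rescale, coeff_egf]

theorem rescale_exp_eq_egf (c : R) : rescale c (exp R) = egf (c ^ ·) := by
  ext n
  simp [coeff_rescale, coeff_egf, coeff_exp, Algebra.smul_def, mul_comm]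

theorem exp_eq_egf_one : exp R = egf fun _ => 1 := by
  simpa using rescale_exp_eq_egf (1 : R)

theorem egf_mul (a b : ℕ → R) :
    egf a * egf b = egf (fun n => ∑ k ∈ range (n + 1), (n.choose k : R) * a k * b (n - k)) := by
  ext n
  rw [coeff_mul, Finset.Nat.sum_antidiagonal_eq_sum_range_succ_mk, coeff_egf, smul_sum]
  refine sum_congr rfl fun k hk => ?_
  have hchoose : (k ! : ℚ)⁻¹ * ((n - k)! : ℚ)⁻¹ = (n ! : ℚ)⁻¹ * n.choose k := by
    rw [Nat.cast_choose ℚ (mem_range_succ_iff.mp hk)]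
    field_simp
  have hchoose' := congrArg (algebraMap ℚ R) hchoose
  rw [map_mul, map_mul, map_natCast] at hchoose'
  simp only [coeff_egf, Algebra.smul_def]
  linear_combination (a k * b (n - k)) * hchoose'

end PowerSeries

open PowerSeries

section QBernoulli

variable {R : Type*} [CommRing R] {q : R} (L : R)

theorem sub_one_mul_qb_zero (hq : IsUnit (q - 1)) : (q - 1) * qb q L 0 = L := by
  rw [qb, ← mul_assoc, Ring.mul_inverse_cancel _ hq, one_mul]

theorem sub_one_mul_qb_succ (hq : IsUnit (q - 1)) (n : ℕ) :
    (q - 1) * qb q L (n + 1) = (if n + 1 = 1 then 1 else 0) -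
      q * ∑ k ∈ range (n + 1), ((n + 1).choose k : R) * qb q L k := by
  rw [qb, sum_attach (range (n + 1)) (fun k => ((n + 1).choose k : R) * qb q L k), ← mul_assoc,
    Ring.mul_inverse_cancel _ hq, one_mul]

theorem qb_binomial_convolution (hq : IsUnit (q - 1)) (n : ℕ) :
    q * ∑ k ∈ range (n + 1), (n.choose k : R) * qb q L k - qb q L n =
      if n = 0 then L else if n = 1 then 1 else 0 := by
  cases n with
  | zero => simpa [sub_one_mul] using sub_one_mul_qb_zero L hq
  | succ n =>
    rw [sum_range_succ, Nat.choose_self, Nat.cast_one, one_mul, if_neg n.succ_ne_zero]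
    linear_combination sub_one_mul_qb_succ L hq n

variable [Algebra ℚ R]

theorem C_mul_exp_sub_one_mul_egf_qb (hq : IsUnit (q - 1)) :
    (C q * exp R - 1) * egf (qb q L) = C L + X := by
  have hCX : C L + X = egf (fun n => if n = 0 then L else if n = 1 then 1 else 0) := by
    ext n
    rcases n with _ | _ | n <;> simp [coeff_egf, coeff_X]
  calc (C q * exp R - 1) * egf (qb q L) = C q * (egf (qb q L) * exp R) - egf (qb q L) := by ring
    _ = egf (fun n => q * ∑ k ∈ range (n + 1), (n.choose k : R) * qb q L k - qb q L n) := by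
      rw [exp_eq_egf_one, egf_mul, C_mul_egf, ← map_sub]
      simp only [mul_one]
      rfl
    _ = C L + X := by simp_rw [qb_binomial_convolution L hq, hCX]

theorem egf_qS (q : R) (m : ℕ) :
    egf (fun k => qS q k m) = ∑ i ∈ range (m + 1), (C q * exp R) ^ i := by
  simp_rw [qS, ← Finset.sum_fn, map_sum]
  refine sum_congr rfl fun i _ => ?_
  rw [mul_pow, ← map_pow, exp_pow_eq_rescale_exp, rescale_exp_eq_egf, C_mul_egf]
  simp_rw [mul_comm]

theorem egf_qB (q y : R) : egf (fun n => qB q L n y) = egf (qb q L) * rescale y (exp R) := by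
  rw [rescale_exp_eq_egf, egf_mul]
  rfl

theorem C_mul_egf_qb {w : ℕ} (hw : 0 < w) (hq1 : IsUnit (q - 1)) (hqw : IsUnit (q ^ w - 1)) :
    C (w : R) * egf (qb q L) =
      rescale (w : R) (egf (qb (q ^ w) (w * L))) * egf (fun k => qS q k (w - 1)) := by
  have hunit : IsUnit (C q * exp R - 1) := by
    rw [isUnit_iff_constantCoeff]
    simpa [constantCoeff_exp] using hq1
  have hpow : (C q * exp R) ^ w = rescale (w : R) (C (q ^ w) * exp R) := by
    rw [map_mul, rescale_C, ← exp_pow_eq_rescale_exp, mul_pow, map_pow]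
  refine hunit.mul_left_cancel ?_
  calc (C q * exp R - 1) * (C (w : R) * egf (qb q L)) = C (w : R) * (C L + X) := by
        rw [mul_left_comm, C_mul_exp_sub_one_mul_egf_qb L hq1]
    _ = rescale (w : R) ((C (q ^ w) * exp R - 1) * egf (qb (q ^ w) (w * L))) := by
        rw [C_mul_exp_sub_one_mul_egf_qb _ hqw, map_add, rescale_C, rescale_X, map_mul]
        ring
    _ = _ := by
        rw [egf_qS, Nat.sub_add_cancel hw, map_mul, map_sub, ← hpow, map_one, ← mul_geom_sum]
        ring

end QBernoulli

theorem qBernoulli_power_sum_formula {R : Type*} [CommRing R] [Algebra ℚ R] (q L : R)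
    (hq : ∀ w : ℕ, 0 < w → IsUnit (q ^ w - 1)) (w : ℕ) (hw : 0 < w) (x : R) (n : ℕ) :
    (w : R) * qB q L n ((w : R) * x)
      = ∑ k ∈ Finset.range (n + 1), (n.choose k : R) * qB (q ^ w) ((w : R) * L) k x *
          qS q (n - k) (w - 1) * (w : R) ^ k := by
  have hq1 : IsUnit (q - 1) := by simpa using hq 1 one_pos
  suffices egf (fun n => (w : R) * qB q L n (w * x)) =
      egf (fun n => ∑ k ∈ range (n + 1), (n.choose k : R) * qB (q ^ w) (w * L) k x *
        qS q (n - k) (w - 1) * (w : R) ^ k) from congrFun (egf_injective this) n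
  calc egf (fun n => (w : R) * qB q L n (w * x))
      = C (w : R) * egf (qb q L) * rescale ((w : R) * x) (exp R) := by
        rw [← C_mul_egf, egf_qB, mul_assoc]
    _ = rescale (w : R) (egf fun k => qB (q ^ w) (w * L) k x) * egf fun k => qS q k (w - 1) := by
        rw [C_mul_egf_qb L hw hq1 (hq w hw), egf_qB, map_mul, rescale_rescale, mul_comm x]
        ring
    _ = _ := by
        rw [rescale_egf, egf_mul]
        congr! 3 with n k
        ring
end

section
/- For any positive integer w, any x ∈ R and n ≥ 0: w^n · Σ_{i=0}^{w−1} q^i · B_{n,q^w}(x + i/w) = Σ_{k=0}^n C(n,k) · B_{k,q^w}(x) · S_{n−k,q}(w − 1) · w^k. -/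
/-!
Only the Appell property of `qB` matters: for any parameters,
`B_n(x + y) = Σ_k C(n,k) B_k(x) y^(n-k)`, which follows from the binomial theorem and
`C(n,k) C(k,j) = C(n,j) C(n-j,k-j)` after exchanging the two sums. Taking `y = i/w` and
multiplying by `w^n` turns `y^(n-k)` into `i^(n-k) w^k`; summing against `q^i` over `i < w`
produces the q-power sums `S_{n-k,q}(w-1)`.
-/

open Finset

section

variable {R : Type*} [CommRing R]

theorem sum_Ico_choose_mul_choose_mul_pow (x y : R) {j n : ℕ} (hj : j ≤ n) :
    ∑ k ∈ Ico j (n + 1), (n.choose k : R) * k.choose j * x ^ (k - j) * y ^ (n - k)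
      = n.choose j * (x + y) ^ (n - j) := by
  rw [sum_Ico_eq_sum_range, add_pow, mul_sum]
  refine sum_congr (by congr 1; omega) fun m _ => ?_
  have hchoose : (n.choose (j + m) : R) * (j + m).choose j = n.choose j * (n - j).choose m := by
    have h := Nat.choose_mul (n := n) (k := j + m) (s := j) le_self_add
    rw [add_tsub_cancel_left] at h
    simpa only [Nat.cast_mul] using congrArg (Nat.cast : ℕ → R) h
  rw [add_tsub_cancel_left, ← Nat.sub_sub]
  linear_combination (x ^ m * y ^ (n - j - m)) * hchoose

theorem qB_add (q L : R) (n : ℕ) (x y : R) :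
    qB q L n (x + y) = ∑ k ∈ range (n + 1), (n.choose k : R) * qB q L k x * y ^ (n - k) := by
  calc qB q L n (x + y)
      = ∑ j ∈ range (n + 1), qb q L j *
          ∑ k ∈ Ico j (n + 1), (n.choose k : R) * k.choose j * x ^ (k - j) * y ^ (n - k) := by
        refine sum_congr rfl fun j hj => ?_
        rw [sum_Ico_choose_mul_choose_mul_pow x y (Nat.lt_succ_iff.mp (mem_range.mp hj))]
        ring
    _ = ∑ k ∈ range (n + 1), (n.choose k : R) * qB q L k x * y ^ (n - k) := by
        simp only [qB, range_eq_Ico, mul_sum, sum_mul]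
        rw [← sum_Ico_Ico_comm]
        refine sum_congr rfl fun j _ => sum_congr rfl fun k _ => ?_
        ring

theorem pow_mul_qB_add (q L c x y : R) (n : ℕ) :
    c ^ n * qB q L n (x + y)
      = ∑ k ∈ range (n + 1), (n.choose k : R) * qB q L k x * (c * y) ^ (n - k) * c ^ k := by
  rw [qB_add, mul_sum]
  refine sum_congr rfl fun k hk => ?_
  rw [← pow_sub_mul_pow c (Nat.lt_succ_iff.mp (mem_range.mp hk))]
  ring

theorem natCast_mul_algebraMap_div [Algebra ℚ R] (a : ℚ) {w : ℕ} (hw : w ≠ 0) :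
    (w : R) * algebraMap ℚ R (a / w) = algebraMap ℚ R a := by
  rw [← map_natCast (algebraMap ℚ R) w, ← map_mul, mul_div_cancel₀ _ (Nat.cast_ne_zero.mpr hw)]

end

theorem qBernoulli_mult_eq_powersum_general {R : Type*} [CommRing R] [Algebra ℚ R] (q L : R)
    (w : ℕ) (hw : 0 < w) (x : R) (n : ℕ) :
    (w : R) ^ n * ∑ i ∈ Finset.range w, q ^ i *
        qB (q ^ w) ((w : R) * L) n (x + algebraMap ℚ R ((i : ℚ) / (w : ℚ)))
      = ∑ k ∈ Finset.range (n + 1), (n.choose k : R) * qB (q ^ w) ((w : R) * L) k x *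
          qS q (n - k) (w - 1) * (w : R) ^ k := by
  simp only [mul_sum, mul_left_comm _ (q ^ _), pow_mul_qB_add, natCast_mul_algebraMap_div _ hw.ne',
    map_natCast]
  rw [sum_comm]
  refine sum_congr rfl fun k _ => ?_
  rw [qS, Nat.sub_add_cancel hw, mul_sum, sum_mul]
  refine sum_congr rfl fun i _ => ?_
  ring

theorem qBernoulli_mult_eq_powersum {R : Type*} [CommRing R] [Algebra ℚ R] (q L : R)
    (hq : ∀ w : ℕ, 0 < w → IsUnit (q ^ w - 1)) (w : ℕ) (hw : 0 < w) (x : R) (n : ℕ) :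
    (w : R) ^ n * ∑ i ∈ Finset.range w, q ^ i *
        qB (q ^ w) ((w : R) * L) n (x + algebraMap ℚ R ((i : ℚ) / (w : ℚ)))
      = ∑ k ∈ Finset.range (n + 1), (n.choose k : R) * qB (q ^ w) ((w : R) * L) k x *
          qS q (n - k) (w - 1) * (w : R) ^ k :=
  qBernoulli_mult_eq_powersum_general q L w hw x n
end

section
/- For a positive integer w, y1, y2 ∈ R and n ≥ 0: Σ_{k=0}^n C(n,k) · B_{k,q}(w·y1) · B_{n−k,q^w}(y2) · w^{n−k} = Σ_{k=0}^n C(n,k) · B_{k,q^w}(y1) · B_{n−k,q}(w·y2) · w^k. -/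
open Finset

private lemma fact_key {n a b c d : ℕ} (h : a + b + c + d = n) :
    n.choose (a + b) * ((a + b).choose a * (c + d).choose c) *
      (a.factorial * b.factorial * c.factorial * d.factorial) = n.factorial := by
  have h1 : (a + b).choose a * a.factorial * b.factorial = (a + b).factorial := by
    have := Nat.choose_mul_factorial_mul_factorial (Nat.le_add_right a b)
    simpa using this
  have h2 : (c + d).choose c * c.factorial * d.factorial = (c + d).factorial := by
    have := Nat.choose_mul_factorial_mul_factorial (Nat.le_add_right c d)
    simpa using this
  have h3 : n.choose (a + b) * (a + b).factorial * (c + d).factorial = n.factorial := by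
    have hle : a + b ≤ n := by omega
    have := Nat.choose_mul_factorial_mul_factorial hle
    rwa [show n - (a + b) = c + d by omega] at this
  calc n.choose (a + b) * ((a + b).choose a * (c + d).choose c) *
        (a.factorial * b.factorial * c.factorial * d.factorial)
      = n.choose (a + b) * ((a + b).choose a * a.factorial * b.factorial) *
          ((c + d).choose c * c.factorial * d.factorial) := by ring
    _ = n.choose (a + b) * (a + b).factorial * (c + d).factorial := by rw [h1, h2]
    _ = n.factorial := h3

private lemma choose_sym {n k i j : ℕ} (hk : k ≤ n) (hi : i ≤ k) (hj : j ≤ n - k) :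
    n.choose k * (k.choose i * (n - k).choose j)
      = n.choose (k - i + j) * ((k - i + j).choose j * (n - (k - i + j)).choose i) := by
  have H1 := fact_key (n := n) (a := i) (b := k - i) (c := j) (d := n - k - j) (by omega)
  have H2 := fact_key (n := n) (a := j) (b := k - i) (c := i) (d := n - k - j) (by omega)
  rw [show i + (k - i) = k by omega, show j + (n - k - j) = n - k by omega] at H1
  rw [show j + (k - i) = k - i + j by omega, show i + (n - k - j) = n - (k - i + j) by omega] at H2
  have hM : (0 : ℕ) < i.factorial * (k - i).factorial * j.factorial * (n - k - j).factorial :=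
    Nat.mul_pos (Nat.mul_pos (Nat.mul_pos i.factorial_pos (k - i).factorial_pos)
      j.factorial_pos) (n - k - j).factorial_pos
  refine Nat.eq_of_mul_eq_mul_right hM ?_
  rw [H1, ← H2]; ring

private lemma triple_swap {R : Type*} [CommRing R] (u v : ℕ → R) (X Y : R) (n : ℕ) :
    ∑ k ∈ range (n + 1), ∑ i ∈ range (k + 1), ∑ j ∈ range (n - k + 1),
      (n.choose k : R) * (k.choose i : R) * ((n - k).choose j : R) *
        u i * v j * X ^ (k - i) * Y ^ (n - k - j)
    = ∑ k ∈ range (n + 1), ∑ i ∈ range (k + 1), ∑ j ∈ range (n - k + 1),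
      (n.choose k : R) * (k.choose i : R) * ((n - k).choose j : R) *
        v i * u j * X ^ (k - i) * Y ^ (n - k - j) := by
  rw [Finset.sum_sigma', Finset.sum_sigma', Finset.sum_sigma', Finset.sum_sigma']
  refine Finset.sum_nbij' (fun p => ⟨⟨p.1.1 - p.1.2 + p.2, p.2⟩, p.1.2⟩)
    (fun p => ⟨⟨p.1.1 - p.1.2 + p.2, p.2⟩, p.1.2⟩) ?_ ?_ ?_ ?_ ?_
  · rintro ⟨⟨k, i⟩, j⟩ hp
    simp only [Finset.mem_sigma, Finset.mem_range] at hp ⊢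
    omega
  · rintro ⟨⟨k, i⟩, j⟩ hp
    simp only [Finset.mem_sigma, Finset.mem_range] at hp ⊢
    omega
  · rintro ⟨⟨k, i⟩, j⟩ hp
    simp only [Finset.mem_sigma, Finset.mem_range] at hp
    simp only []
    have : k - i + j - j + i = k := by omega
    rw [this]
  · rintro ⟨⟨k, i⟩, j⟩ hp
    simp only [Finset.mem_sigma, Finset.mem_range] at hp
    simp only []
    have : k - i + j - j + i = k := by omega
    rw [this]
  · rintro ⟨⟨k, i⟩, j⟩ hp
    simp only [Finset.mem_sigma, Finset.mem_range] at hp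
    obtain ⟨⟨hk, hi⟩, hj⟩ := hp
    have hk' : k ≤ n := by omega
    have hi' : i ≤ k := by omega
    have hj' : j ≤ n - k := by omega
    have hnat := choose_sym hk' hi' hj'
    have hc : ((n.choose k : R)) * (k.choose i : R) * ((n - k).choose j : R)
        = (n.choose (k - i + j) : R) * ((k - i + j).choose j : R) *
          ((n - (k - i + j)).choose i : R) := by
      have := congrArg (Nat.cast : ℕ → R) hnat
      push_cast at this
      linear_combination this
    simp only []
    rw [show k - i + j - j = k - i by omega, show n - (k - i + j) - i = n - k - j by omega]
    linear_combination u i * v j * X ^ (k - i) * Y ^ (n - k - j) * hc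

private lemma qB_scale {R : Type*} [CommRing R] (q' L' c : R) (m : ℕ) (y : R) :
    qB q' L' m y * c ^ m
      = ∑ j ∈ Finset.range (m + 1),
          (m.choose j : R) * (qb q' L' j * c ^ j) * (c * y) ^ (m - j) := by
  rw [qB, Finset.sum_mul]
  refine Finset.sum_congr rfl fun j hj => ?_
  have hj' : j ≤ m := by simpa [Nat.lt_succ_iff] using Finset.mem_range.mp hj
  have hc : c ^ m = c ^ j * c ^ (m - j) := by rw [← pow_add]; congr 1; omega
  rw [hc, mul_pow]; ring

theorem symm_bernoulli_pair {R : Type*} [CommRing R] [Algebra ℚ R] (q L : R)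
    (hq : ∀ w : ℕ, 0 < w → IsUnit (q ^ w - 1)) (w : ℕ) (hw : 0 < w) (y1 y2 : R) (n : ℕ) :
    ∑ k ∈ Finset.range (n + 1), (n.choose k : R) * qB q L k ((w : R) * y1) *
        qB (q ^ w) ((w : R) * L) (n - k) y2 * (w : R) ^ (n - k)
      = ∑ k ∈ Finset.range (n + 1), (n.choose k : R) * qB (q ^ w) ((w : R) * L) k y1 *
          qB q L (n - k) ((w : R) * y2) * (w : R) ^ k := by
  have hL : ∀ k ∈ Finset.range (n + 1),
      (n.choose k : R) * qB q L k ((w : R) * y1) *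
          qB (q ^ w) ((w : R) * L) (n - k) y2 * (w : R) ^ (n - k)
        = ∑ i ∈ range (k + 1), ∑ j ∈ range (n - k + 1),
            (n.choose k : R) * (k.choose i : R) * ((n - k).choose j : R) *
              (qb q L i) * (qb (q ^ w) ((w : R) * L) j * (w : R) ^ j) *
              ((w : R) * y1) ^ (k - i) * ((w : R) * y2) ^ (n - k - j) := by
    intro k hk
    have e1 : (n.choose k : R) * qB q L k ((w : R) * y1) *
        qB (q ^ w) ((w : R) * L) (n - k) y2 * (w : R) ^ (n - k)
        = (n.choose k : R) * qB q L k ((w : R) * y1) *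
          (qB (q ^ w) ((w : R) * L) (n - k) y2 * (w : R) ^ (n - k)) := by ring
    rw [e1, qB_scale, qB]
    simp only [Finset.mul_sum, Finset.sum_mul]
    rw [Finset.sum_comm]
    refine Finset.sum_congr rfl fun i hi => Finset.sum_congr rfl fun j hj => ?_
    ring
  have hR : ∀ k ∈ Finset.range (n + 1),
      (n.choose k : R) * qB (q ^ w) ((w : R) * L) k y1 *
          qB q L (n - k) ((w : R) * y2) * (w : R) ^ k
        = ∑ i ∈ range (k + 1), ∑ j ∈ range (n - k + 1),
            (n.choose k : R) * (k.choose i : R) * ((n - k).choose j : R) *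
              (qb (q ^ w) ((w : R) * L) i * (w : R) ^ i) * (qb q L j) *
              ((w : R) * y1) ^ (k - i) * ((w : R) * y2) ^ (n - k - j) := by
    intro k hk
    have e1 : (n.choose k : R) * qB (q ^ w) ((w : R) * L) k y1 *
        qB q L (n - k) ((w : R) * y2) * (w : R) ^ k
        = (n.choose k : R) * (qB (q ^ w) ((w : R) * L) k y1 * (w : R) ^ k) *
          qB q L (n - k) ((w : R) * y2) := by ring
    rw [e1, qB_scale, qB]
    simp only [Finset.mul_sum, Finset.sum_mul]
    rw [Finset.sum_comm]
    refine Finset.sum_congr rfl fun i hi => Finset.sum_congr rfl fun j hj => ?_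
    ring
  rw [Finset.sum_congr rfl hL, Finset.sum_congr rfl hR]
  exact triple_swap (fun i => qb q L i)
    (fun j => qb (q ^ w) ((w : R) * L) j * (w : R) ^ j) ((w : R) * y1) ((w : R) * y2) n
end

section
/- Cyclic two-fold symmetry: for positive integers w1, w2, w3, y ∈ R, n ≥ 0: Σ_{k+l+m=n} (n choose k,l,m) · B_{k,q^{w3}}(w1 y) · B_{l,q^{w1}}(w2 y) · B_{m,q^{w2}}(w3 y) · w3^k · w1^l · w2^m = Σ_{k+l+m=n} (n choose k,l,m) · B_{k,q^{w2}}(w1 y) · B_{l,q^{w1}}(w3 y) · B_{m,q^{w3}}(w2 y) · w2^k · w1^l · w3^m. -/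
open Finset

/-!
Write `W = w1 w2 w3`. The recurrence characterising `b_n(p, Λ)` gives the multiplication formula
`d · B_{n,p}(d x) = d^n Σ_{i<d} p^i B_{n,p^d}(x + i/d)`, where `B_{·,p^d}` has parameter `d Λ`.
Applied with `p = q^c` and `c d = W`, it expands each of the three factors on either side into
`q^W`-Bernoulli polynomials. These form an Appell sequence, so the trinomial convolution of
`B_{·,q^W}(u)`, `B_{·,q^W}(v)`, `B_{·,q^W}(w)` depends on `u + v + w` only. Hence `W²` times
either side is `W^n Σ q^e D((s + e)/W)` for one function `D`, with `s = (w1 w2 + w2 w3 + w3 w1) y`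
and `e = c₁ i + c₂ j + c₃ h` running over index boxes that differ between the two sides only by a
permutation.
-/

theorem Nat.choose_mul_choose_sub_comm (n k m : ℕ) :
    n.choose k * (n - k).choose m = n.choose m * (n - m).choose k := by
  have hk := Nat.choose_mul (n := n) (k := k + m) (s := k) (by omega)
  have hm := Nat.choose_mul (n := n) (k := k + m) (s := m) (by omega)
  rw [Nat.add_sub_cancel_left] at hk
  rw [Nat.add_sub_cancel] at hm
  rw [← hk, ← hm, Nat.choose_symm_add]

theorem Finset.sum_comm₃ {α β γ M : Type*} [AddCommMonoid M] (s : Finset α) (t : Finset β)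
    (u : Finset γ) (f : α → β → γ → M) :
    ∑ i ∈ s, ∑ j ∈ t, ∑ l ∈ u, f i j l = ∑ l ∈ u, ∑ j ∈ t, ∑ i ∈ s, f i j l :=
  (sum_congr rfl fun _ _ => sum_comm).trans (sum_comm.trans (sum_congr rfl fun _ _ => sum_comm))

section BinomConv

variable {R : Type*} [CommSemiring R]

/-- Multiplication of exponential generating functions, on coefficient sequences. -/
def binomConv (a b : ℕ → R) (n : ℕ) : R :=
  ∑ k ∈ range (n + 1), (n.choose k : R) * a k * b (n - k)

theorem binomConv_comm (a b : ℕ → R) : binomConv a b = binomConv b a := by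
  funext n
  rw [binomConv, binomConv, ← sum_range_reflect]
  refine sum_congr rfl fun k hk => ?_
  have hk : k ≤ n := Nat.lt_succ_iff.mp (mem_range.mp hk)
  rw [Nat.add_sub_cancel, Nat.choose_symm hk, Nat.sub_sub_self hk]
  ring

theorem binomConv_binomConv_apply (a b c : ℕ → R) (n : ℕ) :
    binomConv a (binomConv b c) n = ∑ k ∈ range (n + 1), ∑ l ∈ range (n - k + 1),
      ((n.choose k : R) * ((n - k).choose l : R)) * a k * b l * c (n - k - l) := by
  simp only [binomConv, mul_sum]
  exact sum_congr rfl fun k _ => sum_congr rfl fun l _ => by ring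

theorem binomConv_assoc (a b c : ℕ → R) :
    binomConv (binomConv a b) c = binomConv a (binomConv b c) := by
  funext n
  rw [binomConv_comm, binomConv_comm b, binomConv_binomConv_apply, binomConv_binomConv_apply,
    sum_comm' (t' := range (n + 1)) (s' := fun k => range (n - k + 1))
      (by intro x y; simp only [mem_range]; constructor <;> intro h <;> omega)]
  refine sum_congr rfl fun k _ => sum_congr rfl fun l _ => ?_
  rw [← Nat.cast_mul, Nat.choose_mul_choose_sub_comm, Nat.cast_mul, Nat.sub_right_comm]
  ring

instance : Std.Commutative (binomConv (R := R)) := ⟨binomConv_comm⟩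

instance : Std.Associative (binomConv (R := R)) := ⟨binomConv_assoc⟩

theorem binomConv_pow (x z : R) : binomConv (x ^ ·) (z ^ ·) = ((x + z) ^ ·) := by
  funext n
  rw [add_pow, binomConv]
  exact sum_congr rfl fun k _ => by ring

theorem binomConv_pow_mul (w : R) (a b : ℕ → R) :
    binomConv (fun k => w ^ k * a k) (fun k => w ^ k * b k) =
      fun n => w ^ n * binomConv a b n := by
  funext n
  rw [binomConv, binomConv, mul_sum]
  refine sum_congr rfl fun k hk => ?_
  rw [← pow_mul_pow_sub w (Nat.lt_succ_iff.mp (mem_range.mp hk))]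
  ring

theorem binomConv_mul_left (r : R) (a b : ℕ → R) :
    binomConv (fun k => r * a k) b = fun n => r * binomConv a b n := by
  funext n
  rw [binomConv, binomConv, mul_sum]
  exact sum_congr rfl fun k _ => by ring

theorem binomConv_mul_right (r : R) (a b : ℕ → R) :
    binomConv a (fun k => r * b k) = fun n => r * binomConv a b n := by
  rw [binomConv_comm, binomConv_mul_left, binomConv_comm]

theorem binomConv_sum_mul_left {ι : Type*} (s : Finset ι) (r : ι → R) (f : ι → ℕ → R)
    (g : ℕ → R) :
    binomConv (fun k => ∑ i ∈ s, r i * f i k) g =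
      fun n => ∑ i ∈ s, r i * binomConv (f i) g n := by
  funext n
  simp only [binomConv, mul_sum, sum_mul]
  rw [sum_comm]
  exact sum_congr rfl fun i _ => sum_congr rfl fun k _ => by ring

theorem binomConv_sum_mul_right {ι : Type*} (s : Finset ι) (r : ι → R) (f : ℕ → R)
    (g : ι → ℕ → R) :
    binomConv f (fun k => ∑ i ∈ s, r i * g i k) =
      fun n => ∑ i ∈ s, r i * binomConv f (g i) n := by
  rw [binomConv_comm, binomConv_sum_mul_left]
  simp only [binomConv_comm f]

theorem binomConv_sum_mul_three {ι κ ν : Type*} (s : Finset ι) (t : Finset κ) (u : Finset ν)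
    (r : ι → R) (r' : κ → R) (r'' : ν → R) (f : ι → ℕ → R) (g : κ → ℕ → R) (h : ν → ℕ → R)
    (n : ℕ) :
    binomConv (fun k => ∑ i ∈ s, r i * f i k)
        (binomConv (fun k => ∑ j ∈ t, r' j * g j k) (fun k => ∑ l ∈ u, r'' l * h l k)) n =
      ∑ i ∈ s, ∑ j ∈ t, ∑ l ∈ u,
        r i * r' j * r'' l * binomConv (f i) (binomConv (g j) (h l)) n := by
  -- The left sums go first: expanding the right ones first nests the sums in the wrong order.
  simp only [binomConv_sum_mul_left]
  simp only [binomConv_sum_mul_right]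
  simp only [mul_sum]
  exact sum_congr rfl fun i _ => sum_congr rfl fun j _ => sum_congr rfl fun l _ => by ring

end BinomConv

section QBernoulli

variable {R : Type*} [CommRing R]

theorem qB_eq_binomConv (q L x : R) : (qB q L · x) = binomConv (qb q L) (x ^ ·) := rfl

theorem qB_zero_right (q L : R) (n : ℕ) : qB q L n 0 = qb q L n := by
  rw [qB, sum_eq_single_of_mem n (self_mem_range_succ n)]
  · simp
  · intro k hk hkn
    rw [zero_pow (by simp only [mem_range] at hk; omega), mul_zero]

theorem qB_one_right (q L : R) (n : ℕ) :
    qB q L n 1 = ∑ k ∈ range (n + 1), (n.choose k : R) * qb q L k := by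
  simp [qB]

theorem qB_add_s17 (q L x z : R) :
    (qB q L · (x + z)) = binomConv (qB q L · x) (z ^ ·) := by
  rw [qB_eq_binomConv, qB_eq_binomConv, ← binomConv_pow, binomConv_assoc]

theorem binomConv_qB_qB_qB (q L u v w : R) :
    binomConv (qB q L · u) (binomConv (qB q L · v) (qB q L · w)) =
      binomConv (qb q L) (binomConv (qb q L) (qB q L · (u + v + w))) := by
  simp only [qB_eq_binomConv]
  rw [← binomConv_pow, ← binomConv_pow]
  ac_rfl

theorem sub_one_mul_qb (q L : R) (hq : IsUnit (q - 1)) (n : ℕ) :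
    (q - 1) * qb q L n = (if n = 1 then 1 else 0) + (if n = 0 then L else 0) -
      q * ∑ k ∈ range n, (n.choose k : R) * qb q L k := by
  cases n with
  | zero => simp [qb, ← mul_assoc, Ring.mul_inverse_cancel _ hq]
  | succ n =>
    rw [qb, ← mul_assoc, Ring.mul_inverse_cancel _ hq, one_mul,
      sum_attach (range (n + 1)) (fun k => ((n + 1).choose k : R) * qb q L k)]
    simp

theorem qb_recurrence (q L : R) (hq : IsUnit (q - 1)) (n : ℕ) :
    q * ∑ k ∈ range (n + 1), (n.choose k : R) * qb q L k =
      qb q L n + (if n = 1 then 1 else 0) + (if n = 0 then L else 0) := by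
  rw [sum_range_succ, Nat.choose_self, Nat.cast_one, one_mul]
  linear_combination sub_one_mul_qb q L hq n

theorem eq_qb_of_recurrence (q L : R) (hq : IsUnit (q - 1)) (γ : ℕ → R)
    (hγ : ∀ n, q * ∑ k ∈ range (n + 1), (n.choose k : R) * γ k =
      γ n + (if n = 1 then 1 else 0) + (if n = 0 then L else 0)) (n : ℕ) :
    γ n = qb q L n := by
  induction n using Nat.strong_induction_on with
  | _ n ih =>
    have hγn := hγ n
    have hbn := qb_recurrence q L hq n
    rw [sum_range_succ, sum_congr rfl fun k hk => by rw [ih k (mem_range.mp hk)]] at hγn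
    rw [sum_range_succ] at hbn
    simp only [Nat.choose_self, Nat.cast_one, one_mul] at hγn hbn
    refine hq.mul_left_cancel ?_
    linear_combination hγn - hbn

end QBernoulli

section Multiplication

variable {R : Type*} [CommRing R]

theorem natCast_mul_qb (p Λ e : R) (d : ℕ) (hp : IsUnit (p - 1)) (hpd : IsUnit (p ^ d - 1))
    (he : (d : R) * e = 1) (n : ℕ) :
    (d : R) * qb p Λ n = (d : R) ^ n * ∑ i ∈ range d, p ^ i * qB (p ^ d) (d * Λ) n (i * e) := by
  set S : ℕ → R := fun m => ∑ i ∈ range d, p ^ i * qB (p ^ d) (d * Λ) m (i * e)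
  suffices h : ∀ m, e * (d : R) ^ m * S m = qb p Λ m by
    rw [← h n]
    linear_combination (d ^ n * S n) * he
  refine eq_qb_of_recurrence p Λ hp _ fun m => ?_
  have shift (i : ℕ) :
      ∑ k ∈ range (m + 1), (m.choose k : R) * ((d : R) ^ k * qB (p ^ d) (d * Λ) k (i * e)) =
        (d : R) ^ m * qB (p ^ d) (d * Λ) m ((i + 1 : ℕ) * e) := by
    rw [Nat.cast_succ, add_mul, one_mul, congrFun (qB_add_s17 _ _ _ _) m, binomConv, mul_sum]
    refine sum_congr rfl fun k hk => ?_
    have hde : (d : R) ^ (m - k) * e ^ (m - k) = 1 := by rw [← mul_pow, he, one_pow]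
    rw [← pow_mul_pow_sub (d : R) (Nat.lt_succ_iff.mp (mem_range.mp hk))]
    linear_combination -(m.choose k * d ^ k * qB (p ^ d) (d * Λ) k (i * e)) * hde
  have telescope : ∑ i ∈ range d, p ^ (i + 1) * qB (p ^ d) (d * Λ) m ((i + 1 : ℕ) * e) =
      S m + (p ^ d * qB (p ^ d) (d * Λ) m 1 - qB (p ^ d) (d * Λ) m 0) := by
    have := sum_range_succ' (fun i => p ^ i * qB (p ^ d) (d * Λ) m (i * e)) d
    rw [sum_range_succ, Nat.cast_zero, zero_mul, pow_zero, one_mul, he] at this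
    linear_combination -this
  have boundary : e * (d : R) ^ m * (p ^ d * qB (p ^ d) (d * Λ) m 1 - qB (p ^ d) (d * Λ) m 0) =
      (if m = 1 then 1 else 0) + (if m = 0 then Λ else 0) := by
    rw [qB_one_right, qB_zero_right, qb_recurrence _ _ hpd]
    rcases m with _ | _ | m
    · simp only [pow_zero, mul_one, zero_ne_one, ↓reduceIte, add_zero, add_sub_cancel_left,
        zero_add]
      linear_combination Λ * he
    · simp only [zero_add, pow_one, ↓reduceIte, one_ne_zero, add_zero, add_sub_cancel_left,
        mul_one]
      linear_combination he
    · simp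
  calc p * ∑ k ∈ range (m + 1), (m.choose k : R) * (e * (d : R) ^ k * S k)
      = e * p * ∑ i ∈ range d, p ^ i *
          ∑ k ∈ range (m + 1), (m.choose k : R) * ((d : R) ^ k * qB (p ^ d) (d * Λ) k (i * e)) := by
        simp only [S, mul_sum]
        rw [sum_comm]
        exact sum_congr rfl fun i _ => sum_congr rfl fun k _ => by ring
    _ = e * (d : R) ^ m * ∑ i ∈ range d, p ^ (i + 1) * qB (p ^ d) (d * Λ) m ((i + 1 : ℕ) * e) := by
        simp only [shift, mul_sum]
        exact sum_congr rfl fun i _ => by ring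
    _ = e * (d : R) ^ m * S m + (if m = 1 then 1 else 0) + (if m = 0 then Λ else 0) := by
        rw [telescope, mul_add, boundary, add_assoc]

theorem natCast_mul_qB (p Λ e : R) (d : ℕ) (hp : IsUnit (p - 1)) (hpd : IsUnit (p ^ d - 1))
    (he : (d : R) * e = 1) (n : ℕ) (x : R) :
    (d : R) * qB p Λ n (d * x) =
      (d : R) ^ n * ∑ i ∈ range d, p ^ i * qB (p ^ d) (d * Λ) n (x + i * e) := by
  simp_rw [add_comm x, congrFun (qB_add_s17 _ _ _ _) n, binomConv, mul_sum]
  rw [sum_comm, qB, mul_sum]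
  refine sum_congr rfl fun k hk => ?_
  have hdk : (d : R) ^ k * (d : R) ^ (n - k) = (d : R) ^ n :=
    pow_mul_pow_sub _ (Nat.lt_succ_iff.mp (mem_range.mp hk))
  calc (d : R) * ((n.choose k : R) * qb p Λ k * ((d : R) * x) ^ (n - k))
      = (n.choose k : R) * ((d : R) * qb p Λ k) * ((d : R) ^ (n - k) * x ^ (n - k)) := by ring
    _ = _ := by
        rw [natCast_mul_qb p Λ e d hp hpd he k, mul_sum, mul_sum, sum_mul]
        refine sum_congr rfl fun i _ => ?_
        linear_combination (n.choose k * p ^ i * qB (p ^ d) (d * Λ) k (i * e) * x ^ (n - k)) * hdk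

end Multiplication

section CyclicSymmetry

variable {R : Type*} [CommRing R]

theorem natCast_mul_pow_mul_qB_pow (q L E a : R) {c d W : ℕ} (hc : IsUnit (q ^ c - 1))
    (hW : IsUnit (q ^ W - 1)) (hcd : c * d = W) (hE : (W : R) * E = 1) (k : ℕ) :
    (d : R) * ((c : R) ^ k * qB (q ^ c) (c * L) k a) =
      (W : R) ^ k * ∑ i ∈ range d, q ^ (c * i) * qB (q ^ W) (W * L) k (c * (a + i) * E) := by
  subst hcd
  push_cast at hE ⊢
  have he : (d : R) * (c * E) = 1 := by linear_combination hE
  have key := natCast_mul_qB (q ^ c) (c * L) (c * E) d hc (by rwa [← pow_mul]) he k (a * c * E)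
  rw [show (d : R) * (a * c * E) = a by linear_combination a * hE] at key
  calc (d : R) * ((c : R) ^ k * qB (q ^ c) (c * L) k a)
      = (c : R) ^ k * ((d : R) * qB (q ^ c) (c * L) k a) := by ring
    _ = _ := by
        rw [key, ← mul_assoc, ← mul_pow, mul_sum, mul_sum]
        refine sum_congr rfl fun i _ => ?_
        rw [← pow_mul, ← pow_mul, mul_left_comm (d : R), ← mul_assoc (c : R),
          show a * c * E + i * (c * E) = c * (a + i) * E by ring]

theorem natCast_mul_trinomial_sum_qB (q L E : R) {n W : ℕ}
    (hq : ∀ w : ℕ, 0 < w → IsUnit (q ^ w - 1)) (hW : 0 < W) (hE : (W : R) * E = 1)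
    {c₁ c₂ c₃ d₁ d₂ d₃ : ℕ} (h₁ : c₁ * d₁ = W) (h₂ : c₂ * d₂ = W) (h₃ : c₃ * d₃ = W)
    (a₁ a₂ a₃ : R) :
    ((d₁ * d₂ * d₃ : ℕ) : R) * ∑ k ∈ range (n + 1), ∑ l ∈ range (n - k + 1),
        ((n.choose k : R) * ((n - k).choose l : R)) *
          qB (q ^ c₁) (c₁ * L) k a₁ * qB (q ^ c₂) (c₂ * L) l a₂ *
          qB (q ^ c₃) (c₃ * L) (n - k - l) a₃ * (c₁ : R) ^ k * (c₂ : R) ^ l * (c₃ : R) ^ (n - k - l)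
      = (W : R) ^ n * ∑ i ∈ range d₁, ∑ j ∈ range d₂, ∑ h ∈ range d₃,
          q ^ (c₁ * i + c₂ * j + c₃ * h) *
            binomConv (qb (q ^ W) (W * L)) (binomConv (qb (q ^ W) (W * L))
              (qB (q ^ W) (W * L) · ((c₁ * a₁ + c₂ * a₂ + c₃ * a₃) * E +
                (c₁ * i + c₂ * j + c₃ * h : ℕ) * E))) n := by
  have hc (c d : ℕ) (h : c * d = W) : IsUnit (q ^ c - 1) :=
    hq c (Nat.pos_of_mul_pos_right (h ▸ hW))
  have f₁ := natCast_mul_pow_mul_qB_pow q L E a₁ (hc _ _ h₁) (hq W hW) h₁ hE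
  have f₂ := natCast_mul_pow_mul_qB_pow q L E a₂ (hc _ _ h₂) (hq W hW) h₂ hE
  have f₃ := natCast_mul_pow_mul_qB_pow q L E a₃ (hc _ _ h₃) (hq W hW) h₃ hE
  calc _ = binomConv (fun k => (d₁ : R) * ((c₁ : R) ^ k * qB (q ^ c₁) (c₁ * L) k a₁))
        (binomConv (fun k => (d₂ : R) * ((c₂ : R) ^ k * qB (q ^ c₂) (c₂ * L) k a₂))
          (fun k => (d₃ : R) * ((c₃ : R) ^ k * qB (q ^ c₃) (c₃ * L) k a₃))) n := by
        simp only [binomConv_mul_left, binomConv_mul_right, binomConv_binomConv_apply, mul_sum]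
        push_cast
        exact sum_congr rfl fun k _ => sum_congr rfl fun l _ => by ring
    _ = _ := by
        simp only [f₁, f₂, f₃, binomConv_pow_mul]
        rw [binomConv_sum_mul_three]
        simp only [mul_sum]
        refine sum_congr rfl fun i _ => sum_congr rfl fun j _ => sum_congr rfl fun l _ => ?_
        have harg : (c₁ : R) * (a₁ + i) * E + c₂ * (a₂ + j) * E + c₃ * (a₃ + l) * E =
            (c₁ * a₁ + c₂ * a₂ + c₃ * a₃) * E + (c₁ * i + c₂ * j + c₃ * l : ℕ) * E := by
          push_cast
          ring
        rw [binomConv_qB_qB_qB, harg, pow_add, pow_add]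

end CyclicSymmetry

theorem symm_cyclic_BBB {R : Type*} [CommRing R] [Algebra ℚ R] (q L : R)
    (hq : ∀ w : ℕ, 0 < w → IsUnit (q ^ w - 1)) (w1 w2 w3 : ℕ) (hw1 : 0 < w1) (hw2 : 0 < w2) (hw3 : 0 < w3) (y : R) (n : ℕ) :
    ∑ k ∈ Finset.range (n + 1), ∑ l ∈ Finset.range (n - k + 1),
        ((n.choose k : R) * ((n - k).choose l : R)) *
          qB (q ^ w3) ((w3 : R) * L) k ((w1 : R) * y) *
          qB (q ^ w1) ((w1 : R) * L) l ((w2 : R) * y) *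
          qB (q ^ w2) ((w2 : R) * L) (n - k - l) ((w3 : R) * y) *
          (w3 : R) ^ k * (w1 : R) ^ l * (w2 : R) ^ (n - k - l)
      = ∑ k ∈ Finset.range (n + 1), ∑ l ∈ Finset.range (n - k + 1),
          ((n.choose k : R) * ((n - k).choose l : R)) *
            qB (q ^ w2) ((w2 : R) * L) k ((w1 : R) * y) *
            qB (q ^ w1) ((w1 : R) * L) l ((w3 : R) * y) *
            qB (q ^ w3) ((w3 : R) * L) (n - k - l) ((w2 : R) * y) *
            (w2 : R) ^ k * (w1 : R) ^ l * (w3 : R) ^ (n - k - l) := by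
  have hW : 0 < w1 * w2 * w3 := by positivity
  have hWunit : IsUnit ((w1 * w2 * w3 : ℕ) : R) := by
    rw [← map_natCast (algebraMap ℚ R)]
    exact (Nat.cast_ne_zero.mpr hW.ne').isUnit.map _
  obtain ⟨E, hE⟩ := hWunit.exists_right_inv
  have hL := natCast_mul_trinomial_sum_qB q L E (n := n) hq hW hE
    (c₁ := w3) (d₁ := w1 * w2) (c₂ := w1) (d₂ := w2 * w3) (c₃ := w2) (d₃ := w3 * w1)
    (by ring) (by ring) (by ring) (w1 * y) (w2 * y) (w3 * y)
  have hR := natCast_mul_trinomial_sum_qB q L E (n := n) hq hW hE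
    (c₁ := w2) (d₁ := w3 * w1) (c₂ := w1) (d₂ := w2 * w3) (c₃ := w3) (d₃ := w1 * w2)
    (by ring) (by ring) (by ring) (w1 * y) (w3 * y) (w2 * y)
  rw [show w1 * w2 * (w2 * w3) * (w3 * w1) = (w1 * w2 * w3) ^ 2 by ring] at hL
  rw [show w3 * w1 * (w2 * w3) * (w1 * w2) = (w1 * w2 * w3) ^ 2 by ring,
    show (w2 : R) * (w1 * y) + w1 * (w3 * y) + w3 * (w2 * y) =
      w3 * (w1 * y) + w1 * (w2 * y) + w2 * (w3 * y) by ring, sum_comm₃] at hR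
  have hW2unit : IsUnit (((w1 * w2 * w3) ^ 2 : ℕ) : R) := by
    rw [Nat.cast_pow]
    exact hWunit.pow 2
  refine hW2unit.mul_left_cancel (hL.trans (hR.trans ?_).symm)
  refine congrArg _ (sum_congr rfl fun i _ => sum_congr rfl fun j _ => sum_congr rfl fun l _ => ?_)
  rw [show w2 * l + w1 * j + w3 * i = w3 * i + w1 * j + w2 * l by ring]
end
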